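/- arXiv:2105.04432 — 4 statements merged into one kernel-verified Lean document; each statement's English description precedes it below -/
import Mathlib

section
/- Let ℓ = τ − b and suppose 1 ≤ ℓ < δ. Write δ = vℓ + x with 0 ≤ x < ℓ. Then for every t ∈ [ℓ : vℓ−1], the vector w ∈ K^n defined as (row t of H) − (row (t−ℓ) of H) satisfies w_t = α and w_i = 0 for every i ∈ [t+1 : t+b−1] ∪ [τ+t+1 : τ+δ]. -/
set_option linter.unusedVariables false

/-- The recursively defined 0/1 matrix `P^a_{u,v}`, given entrywise:
`Pmat a u v i j` is the `(i,j)` entry of `P^a_{u,v}`. -/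
def Pmat (a u v i j : ℕ) : ℕ :=
  if h1 : 0 < u ∧ u + a < v then
    if j < u then (if i = j then 1 else 0)
    else if j < u + a then 0
    else Pmat a u (v - u - a) i (j - u - a)
  else if h2 : 0 < v ∧ v < u then
    if i < v then (if i = j then 1 else 0)
    else Pmat a (u - v) v (i - v) j
  else
    if i = j ∧ j < u then 1 else 0
termination_by u + v
decreasing_by
  · omega
  · omega

/-- The parity-check matrix `H` of Construction 1, given entrywise (with `δ = b - a`):
`α·I_δ` in the top-left `δ×δ` corner, `P^a_{δ,τ-b}` in columns `[b:τ-1]` of the top `δ` rows,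
`H(0,τ) = α`, `H(j,τ+j) = 1` for `j ∈ [1:δ]`, `I_a` in columns `[0:a-1]` of the bottom `a` rows,
and `C` in columns `[a:τ]` of the bottom `a` rows; all other entries are `0`. -/
def Hmat {K : Type*} [Field K] (a b τ : ℕ) (α : K) (C : ℕ → ℕ → K) (i j : ℕ) : K :=
  if i < b - a then
    if j < b - a then (if i = j then α else 0)
    else if b ≤ j ∧ j < τ then (Pmat a (b - a) (τ - b) i (j - b) : K)
    else if j = τ then (if i = 0 then α else 0)
    else if τ + 1 ≤ j ∧ j ≤ τ + (b - a) then (if j = τ + i then 1 else 0)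
    else 0
  else
    if j < a then (if i = (b - a) + j then 1 else 0)
    else if j ≤ τ then C (i - (b - a)) (j - a)
    else if j = τ + (b - a) then (if i = b - a then 1 else 0)
    else 0

/-- Every square submatrix of the `m × n` matrix `C` (given entrywise) is invertible. -/
def allMinorsInvertible {K : Type*} [Field K] (C : ℕ → ℕ → K) (m n : ℕ) : Prop :=
  ∀ (k : ℕ) (I J : Fin k → ℕ), Function.Injective I → Function.Injective J →
    (∀ i, I i < m) → (∀ j, J j < n) →
    (Matrix.of fun i j : Fin k => C (I i) (J j)).det ≠ 0

/-!
Both rows `t` and `t - ℓ` lie in the top `δ` rows of `H`, which are supported on the diagonal,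
on the block `P^a_{δ,ℓ}` in columns `[b:τ-1]`, and on column `τ + row`. The diagonal entries give
`w_t = α` and vanish beyond `t`; the entries in columns `t + b = τ + (t - ℓ)` and `τ + t` fall
outside both ranges. Since `ℓ < δ`, `P^a_{δ,ℓ}` is `I_ℓ` stacked on `P^a_{δ-ℓ,ℓ}`, so its first
`v·ℓ ≤ δ` rows are `v` stacked copies of `I_ℓ`; rows `t` and `t - ℓ` of it therefore agree.
-/

theorem Pmat_eq_ite_mod {a δ ℓ r j v : ℕ} (hj : j < ℓ) (hr : r < v * ℓ) (hv : v * ℓ ≤ δ) :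
    Pmat a δ ℓ r j = if r % ℓ = j then 1 else 0 := by
  induction v generalizing δ r with
  | zero => simp at hr
  | succ v ih =>
    rw [Nat.succ_mul] at hr hv
    rw [Pmat, dif_neg (by omega)]
    by_cases hℓδ : ℓ < δ
    · rw [dif_pos ⟨by omega, hℓδ⟩]
      by_cases hrℓ : r < ℓ
      · rw [if_pos hrℓ, Nat.mod_eq_of_lt hrℓ]
      · rw [if_neg hrℓ, ih (by omega) (by omega), ← Nat.mod_eq_sub_mod (by omega)]
    · have hjδ : j < δ := by omega
      rw [dif_neg (by omega), Nat.mod_eq_of_lt (by omega)]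
      simp only [hjδ, and_true]

theorem Pmat_sub_row {a δ ℓ r j v : ℕ} (hj : j < ℓ) (hℓr : ℓ ≤ r) (hr : r < v * ℓ)
    (hv : v * ℓ ≤ δ) : Pmat a δ ℓ (r - ℓ) j = Pmat a δ ℓ r j := by
  rw [Pmat_eq_ite_mod hj (by omega) hv, Pmat_eq_ite_mod hj hr hv, ← Nat.mod_eq_sub_mod hℓr]

section TopRows

variable {K : Type*} [Field K] {a b τ : ℕ} {α : K} {C : ℕ → ℕ → K} {r j : ℕ}

theorem Hmat_top_of_lt (hr : r < b - a) (hj : j < b - a) :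
    Hmat a b τ α C r j = if r = j then α else 0 := by
  rw [Hmat, if_pos hr, if_pos hj]

theorem Hmat_top_of_mem_Ico (hr : r < b - a) (hj : b ≤ j ∧ j < τ) :
    Hmat a b τ α C r j = (Pmat a (b - a) (τ - b) r (j - b) : K) := by
  rw [Hmat, if_pos hr, if_neg (by omega), if_pos hj]

theorem Hmat_top_eq_zero (hr : r < b - a) (hj : b - a ≤ j) (hjP : ¬(b ≤ j ∧ j < τ))
    (hjr : j ≠ τ + r) : Hmat a b τ α C r j = 0 := by
  rw [Hmat, if_pos hr, if_neg (by omega), if_neg hjP]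
  split_ifs <;> first | rfl | omega

end TopRows

theorem property_B1_row_difference_general {K : Type*} [Field K] (a b τ : ℕ)
    (α : K) (C : ℕ → ℕ → K) (v x : ℕ) (hvx : b - a = v * (τ - b) + x)
    (t : ℕ) (ht1 : τ - b ≤ t) (ht2 : t < v * (τ - b)) :
    Hmat a b τ α C t t - Hmat a b τ α C (t - (τ - b)) t = α ∧
    ∀ i : ℕ, ((t + 1 ≤ i ∧ i ≤ t + b - 1) ∨ (τ + t + 1 ≤ i ∧ i ≤ τ + (b - a))) →
      Hmat a b τ α C t i - Hmat a b τ α C (t - (τ - b)) i = 0 := by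
  have hℓ : 0 < τ - b := Nat.pos_of_ne_zero fun h => by simp [h] at ht2
  have ht : t < b - a := by omega
  have ht' : t - (τ - b) < b - a := by omega
  refine ⟨?_, fun i hi => ?_⟩
  · rw [Hmat_top_of_lt ht ht, Hmat_top_of_lt ht' ht, if_pos rfl, if_neg (by omega), sub_zero]
  rcases lt_or_ge i (b - a) with hiδ | hiδ
  · rw [Hmat_top_of_lt ht hiδ, Hmat_top_of_lt ht' hiδ, if_neg (by omega), if_neg (by omega),
      sub_self]
  by_cases hiP : b ≤ i ∧ i < τ
  · rw [Hmat_top_of_mem_Ico ht hiP, Hmat_top_of_mem_Ico ht' hiP,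
      Pmat_sub_row (by omega) ht1 ht2 (by omega), sub_self]
  · rw [Hmat_top_eq_zero ht hiδ hiP (by omega), Hmat_top_eq_zero ht' hiδ hiP (by omega), sub_self]

/-- let `ℓ = τ - b` with `1 ≤ ℓ < δ` and write `δ = v·ℓ + x`, `0 ≤ x < ℓ`.
For every `t ∈ [ℓ : v·ℓ - 1]`, the vector `w = (row t of H) - (row (t-ℓ) of H)` satisfies
`w t = α` and `w i = 0` for every `i ∈ [t+1 : t+b-1] ∪ [τ+t+1 : τ+δ]`. -/
theorem property_B1_row_difference {K : Type*} [Field K] (F : Subfield K) (a b τ : ℕ)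
    (ha : 0 < a) (hab : a < b) (hbτ : b ≤ τ)
    (α : K) (hα : α ∉ F)
    (C : ℕ → ℕ → K) (hCF : ∀ i j, i < a → j < τ + 1 - a → C i j ∈ F)
    (hC : allMinorsInvertible C a (τ + 1 - a))
    (hℓpos : 1 ≤ τ - b) (hℓδ : τ - b < b - a)
    (v x : ℕ) (hvx : b - a = v * (τ - b) + x) (hx : x < τ - b)
    (t : ℕ) (ht1 : τ - b ≤ t) (ht2 : t < v * (τ - b)) :
    Hmat a b τ α C t t - Hmat a b τ α C (t - (τ - b)) t = α ∧
    ∀ i : ℕ, ((t + 1 ≤ i ∧ i ≤ t + b - 1) ∨ (τ + t + 1 ≤ i ∧ i ≤ τ + (b - a))) →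
      Hmat a b τ α C t i - Hmat a b τ α C (t - (τ - b)) i = 0 :=
  property_B1_row_difference_general a b τ α C v x hvx t ht1 ht2
end

section
/- Let ℓ = τ − b and suppose 1 ≤ ℓ < δ. Write δ = vℓ + x with 0 ≤ x < ℓ, and suppose x ≥ 1. Then for every t ∈ [vℓ : vℓ+x−1], there exists a set S ⊆ [0 : t−1] of row indices such that the vector w ∈ K^n defined as (row t of H) − Σ_{j∈S} (row j of H) satisfies w_t = α and w_i = 0 for every i ∈ [t+1 : t+b−1] ∪ [τ+t+1 : τ+δ]. -/
set_option linter.unusedVariables false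

/-! Since `ℓ = τ - b < δ = vℓ + x`, the matrix `P^a_{δ,ℓ}` consists of `v` identity blocks `I_ℓ`
stacked on `P^a_{x,ℓ}`, and row `t = vℓ + r` of `P` lies in the last part, where all entries left
of the diagonal vanish, so its support lies in columns `[r : ℓ-1]`. Subtracting from row `t` of `H`
the rows `(v-1)ℓ + c` of `H` for `c` in that support clears the `P`-block, and these rows lie in
`[t-ℓ : t-1]`, so their `α` on the diagonal and their `1` in column `τ + j` fall outside the window. -/

section Pmat

variable {a u v ℓ k i j c r : ℕ}

theorem Pmat_le_one (a u v i j : ℕ) : Pmat a u v i j ≤ 1 := by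
  fun_induction Pmat a u v i j <;> grind

theorem Pmat_of_lt (hvu : v < u) (hi : i < v) : Pmat a u v i j = if i = j then 1 else 0 := by
  rw [Pmat, dif_neg (by omega), dif_pos ⟨by omega, hvu⟩, if_pos hi]

theorem Pmat_eq_zero_of_lt (huv : u ≤ v) (hi : i < u) (hji : j < i) : Pmat a u v i j = 0 := by
  rw [Pmat]
  split_ifs <;> omega

theorem Pmat_add_add (hℓ : 0 < ℓ) (hu : 0 < u) (i j : ℕ) :
    Pmat a (ℓ + u) ℓ (ℓ + i) j = Pmat a u ℓ i j := by
  rw [Pmat, dif_neg (by omega), dif_pos ⟨hℓ, by omega⟩, if_neg (by omega)]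
  simp

theorem Pmat_mul_add_mul_add (hℓ : 0 < ℓ) (k : ℕ) (hu : 0 < u) (i j : ℕ) :
    Pmat a (k * ℓ + u) ℓ (k * ℓ + i) j = Pmat a u ℓ i j := by
  induction k generalizing u i with
  | zero => simp
  | succ k ih =>
    rw [show (k + 1) * ℓ + u = k * ℓ + (ℓ + u) by ring,
      show (k + 1) * ℓ + i = k * ℓ + (ℓ + i) by ring, ih (by omega), Pmat_add_add hℓ hu]

theorem Pmat_mul_add_of_lt (hu : k * ℓ + ℓ < u) (hc : c < ℓ) (j : ℕ) :
    Pmat a u ℓ (k * ℓ + c) j = if c = j then 1 else 0 := by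
  obtain ⟨u, rfl⟩ : ∃ u', u = k * ℓ + u' := ⟨u - k * ℓ, by omega⟩
  rw [Pmat_mul_add_mul_add (by omega) k (by omega), Pmat_of_lt (by omega) hc]

theorem Pmat_mul_add_eq_zero_of_lt (hu : u ≤ k * ℓ + ℓ) (hr : k * ℓ + r < u) (hc : c < r) :
    Pmat a u ℓ (k * ℓ + r) c = 0 := by
  obtain ⟨u, rfl⟩ : ∃ u', u = k * ℓ + u' := ⟨u - k * ℓ, by omega⟩
  rw [Pmat_mul_add_mul_add (by omega) k (by omega), Pmat_eq_zero_of_lt (by omega) (by omega) hc]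

/-- The rows `kℓ + c`, `c < ℓ`, of `P^a_{u,ℓ}` form an identity block, so on the first `ℓ`
columns they reproduce any row of `P^a_{u,ℓ}`, whose entries are `0` or `1`. -/
theorem Pmat_cast_eq_sum_identity_rows {R : Type*} [AddCommMonoidWithOne R]
    (hu : k * ℓ + ℓ < u) (i : ℕ) (hj : j < ℓ) :
    (Pmat a u ℓ i j : R) = ∑ c ∈ (Finset.range ℓ).filter (fun c => Pmat a u ℓ i c = 1),
      (Pmat a u ℓ (k * ℓ + c) j : R) := by
  rw [Finset.sum_congr rfl fun c hc ↦ by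
      rw [Pmat_mul_add_of_lt hu (Finset.mem_range.mp (Finset.mem_filter.mp hc).1), Nat.cast_ite,
        Nat.cast_one, Nat.cast_zero],
    Finset.sum_ite_eq']
  simp only [Finset.mem_filter, Finset.mem_range, hj, true_and]
  split_ifs with h
  · rw [h, Nat.cast_one]
  · rw [Nat.lt_one_iff.mp ((Pmat_le_one ..).lt_of_ne h), Nat.cast_zero]

end Pmat

section Hmat

variable {K : Type*} [Field K] {a b τ : ℕ} {α : K} {C : ℕ → ℕ → K} {i j t : ℕ}

theorem Hmat_self (hi : i < b - a) : Hmat a b τ α C i i = α := by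
  simp [Hmat, hi]

theorem Hmat_eq_Pmat (hi : i < b - a) (hj : b ≤ j ∧ j < τ) :
    Hmat a b τ α C i j = (Pmat a (b - a) (τ - b) i (j - b) : K) := by
  rw [Hmat, if_pos hi, if_neg (by omega), if_pos hj]

theorem Hmat_eq_zero (hi : i < b - a) (hij : i ≠ j) (hj : ¬(b ≤ j ∧ j < τ))
    (hjτ : j ≠ τ + i) : Hmat a b τ α C i j = 0 := by
  rw [Hmat, if_pos hi]
  split_ifs <;> first | rfl | omega

theorem Hmat_eq_zero_of_mem_window (hbτ : b < τ) (hi : i < b - a) (hit : i ≤ t)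
    (hti : t ≤ i + (τ - b)) (hj : t + 1 ≤ j ∧ j ≤ t + b - 1 ∨ τ + t + 1 ≤ j)
    (hjP : ¬(b ≤ j ∧ j < τ)) : Hmat a b τ α C i j = 0 :=
  Hmat_eq_zero hi (by omega) hjP (by omega)

end Hmat

theorem property_B1_row_combination_general {K : Type*} [Field K] (a b τ : ℕ)
    (α : K)
    (C : ℕ → ℕ → K)
    (hℓδ : τ - b < b - a)
    (v x : ℕ) (hvx : b - a = v * (τ - b) + x) (hx : x < τ - b)
    (t : ℕ) (ht1 : v * (τ - b) ≤ t) (ht2 : t < v * (τ - b) + x) :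
    ∃ S : Finset ℕ, (∀ j ∈ S, j < t) ∧
      Hmat a b τ α C t t - ∑ j ∈ S, Hmat a b τ α C j t = α ∧
      ∀ i : ℕ, ((t + 1 ≤ i ∧ i ≤ t + b - 1) ∨ (τ + t + 1 ≤ i ∧ i ≤ τ + (b - a))) →
        Hmat a b τ α C t i - ∑ j ∈ S, Hmat a b τ α C j i = 0 := by
  obtain ⟨w, rfl⟩ := Nat.exists_eq_add_one_of_ne_zero (show v ≠ 0 by rintro rfl; omega)
  set ℓ := τ - b
  have hsucc : (w + 1) * ℓ = w * ℓ + ℓ := add_one_mul w ℓ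
  obtain ⟨r, rfl⟩ : ∃ r, t = (w + 1) * ℓ + r := ⟨t - (w + 1) * ℓ, by omega⟩
  set T := (Finset.range ℓ).filter fun c => Pmat a (b - a) ℓ ((w + 1) * ℓ + r) c = 1
  have hT : ∀ c ∈ T, r ≤ c ∧ c < ℓ := by
    intro c hc
    rw [Finset.mem_filter, Finset.mem_range] at hc
    refine ⟨not_lt.mp fun hcr ↦ ?_, hc.1⟩
    rw [Pmat_mul_add_eq_zero_of_lt (by omega) (by omega) hcr] at hc
    exact zero_ne_one hc.2
  have hS : ∀ j ∈ T.image (w * ℓ + ·), (w + 1) * ℓ + r ≤ j + ℓ ∧ j < (w + 1) * ℓ + r := by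
    simp only [Finset.forall_mem_image]
    intro c hc
    have := hT c hc
    omega
  refine ⟨T.image (w * ℓ + ·), fun j hj ↦ (hS j hj).2, ?_, fun i hi ↦ ?_⟩
  · rw [Hmat_self (by omega), Finset.sum_eq_zero fun j hj ↦
      Hmat_eq_zero (by have := hS j hj; omega) (hS j hj).2.ne (by omega) (by omega), sub_zero]
  by_cases hP : b ≤ i ∧ i < τ
  · rw [Finset.sum_image fun _ _ _ _ h ↦ Nat.add_left_cancel h, Hmat_eq_Pmat (by omega) hP,
      Finset.sum_congr rfl fun c hc ↦ Hmat_eq_Pmat (by have := hT c hc; omega) hP,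
      Pmat_cast_eq_sum_identity_rows (show w * ℓ + ℓ < b - a by omega) _ (by omega), sub_self]
  · rw [Hmat_eq_zero_of_mem_window (by omega) (by omega) le_rfl (by omega) (by omega) hP,
      Finset.sum_eq_zero fun j hj ↦ Hmat_eq_zero_of_mem_window (by omega)
        (by have := hS j hj; omega) (hS j hj).2.le (hS j hj).1 (by omega) hP, sub_zero]

/-- let `ℓ = τ - b` with `1 ≤ ℓ < δ` and write `δ = v·ℓ + x`, `0 ≤ x < ℓ`,
with `x ≥ 1`.  For every `t ∈ [v·ℓ : v·ℓ + x - 1]` there is a set `S ⊆ [0 : t-1]` of row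
indices such that `w = (row t of H) - Σ_{j ∈ S} (row j of H)` satisfies `w t = α` and
`w i = 0` for every `i ∈ [t+1 : t+b-1] ∪ [τ+t+1 : τ+δ]`. -/
theorem property_B1_row_combination {K : Type*} [Field K] (F : Subfield K) (a b τ : ℕ)
    (ha : 0 < a) (hab : a < b) (hbτ : b ≤ τ)
    (α : K) (hα : α ∉ F)
    (C : ℕ → ℕ → K) (hCF : ∀ i j, i < a → j < τ + 1 - a → C i j ∈ F)
    (hC : allMinorsInvertible C a (τ + 1 - a))
    (hℓpos : 1 ≤ τ - b) (hℓδ : τ - b < b - a)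
    (v x : ℕ) (hvx : b - a = v * (τ - b) + x) (hx : x < τ - b) (hxpos : 1 ≤ x)
    (t : ℕ) (ht1 : v * (τ - b) ≤ t) (ht2 : t < v * (τ - b) + x) :
    ∃ S : Finset ℕ, (∀ j ∈ S, j < t) ∧
      Hmat a b τ α C t t - ∑ j ∈ S, Hmat a b τ α C j t = α ∧
      ∀ i : ℕ, ((t + 1 ≤ i ∧ i ≤ t + b - 1) ∨ (τ + t + 1 ≤ i ∧ i ≤ τ + (b - a))) →
        Hmat a b τ α C t i - ∑ j ∈ S, Hmat a b τ α C j i = 0 :=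
  property_B1_row_combination_general a b τ α C hℓδ v x hvx hx t ht1 ht2
end

section
/- (Property R2.) For every set A ⊆ [δ : τ+δ] of column indices with |A| = a, the columns of H indexed by A are linearly independent over K. -/
/-!
Split the columns indexed by `A` into those with index in `(τ, τ + δ)` and the others. The former
are distinct unit vectors supported on the top `δ` rows, so they are independent and vanish on the
bottom `a` rows; it remains to see that the others stay independent on the bottom rows. There they
become at most `a` distinct columns of `[I_a | C]`, column `τ + δ` becoming column `0` (which `A`
misses, as `A ⊆ [δ : τ + δ]`). Any at most `a` columns of `[I_a | C]` are independent: the identity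
columns are unit vectors, and on rows away from their pivots they vanish while the other columns
contain a square, hence invertible, submatrix of `C`.
-/

set_option linter.unusedVariables false

section General

variable {R M N ι κ : Type*} [CommRing R] [AddCommGroup M] [Module R M] [AddCommGroup N]
  [Module R N]

theorem linearIndepOn_of_exists_apply_eq_one {v : ι → κ → R} {s : Set ι}
    (h : ∀ j ∈ s, ∃ p, v j p = 1 ∧ ∀ i ∈ s, i ≠ j → v i p = 0) : LinearIndepOn R v s := by
  choose p hp using h
  exact .of_pairwise_dual_eq_zero_one _ (fun j : s => LinearMap.proj (p j j.2))
    (fun i j hij => (hp i i.2).2 j j.2 fun h => hij (Subtype.ext h).symm) fun j => (hp j j.2).1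

theorem LinearIndepOn.union_of_map_eq_zero {v : ι → M} {s t : Set ι} (ht : LinearIndepOn R v t)
    (f : M →ₗ[R] N) (hf : ∀ i ∈ t, f (v i) = 0) (hs : LinearIndepOn R (f ∘ v) s) :
    LinearIndepOn R v (t ∪ s) := by
  have hker : Submodule.span R (v '' t) ≤ LinearMap.ker f :=
    Submodule.span_le.2 <| Set.image_subset_iff.2 hf
  exact ht.union_of_quotient (hs.of_comp ((Submodule.span R (v '' t)).liftQ f hker))

end General

def bottomRows (R : Type*) [Semiring R] {a b : ℕ} (hab : a ≤ b) :
    (Fin b → R) →ₗ[R] (Fin a → R) :=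
  LinearMap.funLeft R R fun p => ⟨b - a + p, by omega⟩

section IdAppend

variable {K : Type*} [Field K] {a n : ℕ} {C : ℕ → ℕ → K}

/-- Column `j` of the `a × (a + n)` matrix `[I_a | C]`. -/
def idAppendCol (a : ℕ) (C : ℕ → ℕ → K) (j : ℕ) (p : Fin a) : K :=
  if j < a then (if (p : ℕ) = j then 1 else 0) else C p (j - a)

theorem linearIndepOn_minor_cols (hC : allMinorsInvertible C a n) {R J : Finset ℕ}
    (hR : ∀ r ∈ R, r < a) (hJ : ∀ j ∈ J, a ≤ j ∧ j < a + n) (hRJ : R.card = J.card) :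
    LinearIndepOn K (fun j (p : Fin J.card) => C (R.orderIsoOfFin hRJ p) (j - a)) J := by
  let eR := R.orderIsoOfFin hRJ
  let eJ := J.orderIsoOfFin rfl
  have hminor : (Matrix.of fun p q : Fin J.card => C (eR p) (eJ q - a)).det ≠ 0 := by
    refine hC _ _ _ (fun p q h => eR.injective (Subtype.ext h)) (fun p q h => ?_)
      (fun p => hR _ (eR p).2) (fun q => by have := hJ _ (eJ q).2; omega)
    have := hJ _ (eJ p).2
    have := hJ _ (eJ q).2
    exact eJ.injective (Subtype.ext (by omega))
  exact (linearIndependent_equiv eJ.toEquiv).1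
    (Matrix.linearIndependent_cols_of_det_ne_zero hminor)

theorem linearIndepOn_idAppendCol (hC : allMinorsInvertible C a n) {B : Finset ℕ}
    (hB : ∀ j ∈ B, j < a + n) (hcard : B.card ≤ a) :
    LinearIndepOn K (idAppendCol a C) B := by
  let E := B.filter (· < a)
  let J := B.filter (¬ · < a)
  have hEJ : E.card + J.card = B.card := Finset.card_filter_add_card_filter_not _
  have hE : E ⊆ Finset.range a := fun j hj => Finset.mem_range.2 (Finset.mem_filter.1 hj).2
  obtain ⟨R, hRsub, hRJ⟩ : ∃ R ⊆ Finset.range a \ E, R.card = J.card :=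
    Finset.exists_subset_card_eq <| by
      rw [Finset.card_sdiff_of_subset hE, Finset.card_range]
      omega
  have hR : ∀ r ∈ R, r < a ∧ r ∉ E := fun r hr => by simpa using hRsub hr
  have hJ : ∀ j ∈ J, a ≤ j ∧ j < a + n := fun j hj =>
    ⟨not_lt.1 (Finset.mem_filter.1 hj).2, hB j (Finset.mem_filter.1 hj).1⟩
  let eR := R.orderIsoOfFin hRJ
  let rows : (Fin a → K) →ₗ[K] (Fin J.card → K) :=
    LinearMap.funLeft K K fun p => ⟨eR p, (hR _ (eR p).2).1⟩
  have hE_rows : ∀ j ∈ E, rows (idAppendCol a C j) = 0 := fun j hj => funext fun p => by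
    have : (eR p : ℕ) ≠ j := fun h => (hR _ (eR p).2).2 (h ▸ hj)
    simp [rows, idAppendCol, (Finset.mem_filter.1 hj).2, this]
  have hE_li : LinearIndepOn K (idAppendCol a C) E := by
    refine linearIndepOn_of_exists_apply_eq_one fun j hj => ?_
    have hja := (Finset.mem_filter.1 hj).2
    refine ⟨⟨j, hja⟩, by simp [idAppendCol, hja], fun i hi hij => ?_⟩
    simp [idAppendCol, (Finset.mem_filter.1 hi).2, Ne.symm hij]
  have hJ_li : LinearIndepOn K (rows ∘ idAppendCol a C) J :=
    (linearIndepOn_minor_cols hC (fun r hr => (hR r hr).1) hJ hRJ).congr fun j hj =>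
      funext fun p => by simp [rows, idAppendCol, eR, (hJ j hj).1.not_gt]
  refine (hE_li.union_of_map_eq_zero rows hE_rows hJ_li).mono fun j hj => ?_
  by_cases hja : j < a
  · exact Or.inl (Finset.mem_filter.2 ⟨hj, hja⟩)
  · exact Or.inr (Finset.mem_filter.2 ⟨hj, hja⟩)

end IdAppend

section Hcol

variable {K : Type*} [Field K] {a b τ : ℕ} {α : K} {C : ℕ → ℕ → K}

def Hcol (a b τ : ℕ) (α : K) (C : ℕ → ℕ → K) (j : ℕ) (i : Fin b) : K := Hmat a b τ α C i j

theorem Hcol_apply_of_lt (hab : a < b) (hbτ : b ≤ τ) {i j : ℕ} (hi : i < b - a) (hτj : τ < j)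
    (hj : j ≤ τ + (b - a)) :
    Hcol a b τ α C j ⟨i, by omega⟩ = if j = τ + i then 1 else 0 := by
  unfold Hcol Hmat
  split_ifs <;> first | rfl | omega

theorem bottomRows_Hcol_of_le (hab : a < b) {j : ℕ} (hj : j ≤ τ) :
    bottomRows K hab.le (Hcol a b τ α C j) = idAppendCol a C j := by
  funext p
  simp only [bottomRows, Hcol, LinearMap.funLeft_apply]
  unfold Hmat idAppendCol
  split_ifs <;> first | rfl | omega | rw [Nat.add_sub_cancel_left]

theorem bottomRows_Hcol_last (hab : a < b) (hbτ : b ≤ τ) :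
    bottomRows K hab.le (Hcol a b τ α C (τ + (b - a))) = idAppendCol a C 0 := by
  funext p
  simp only [bottomRows, Hcol, LinearMap.funLeft_apply]
  unfold Hmat idAppendCol
  split_ifs <;> first | rfl | omega

theorem bottomRows_Hcol_of_lt (hab : a < b) (hbτ : b ≤ τ) {j : ℕ} (hτj : τ < j)
    (hj : j < τ + (b - a)) :
    bottomRows K hab.le (Hcol a b τ α C j) = 0 := by
  funext p
  simp only [bottomRows, Hcol, LinearMap.funLeft_apply]
  unfold Hmat
  split_ifs <;> first | rfl | omega

theorem linearIndepOn_Hcol_of_lt (hab : a < b) (hbτ : b ≤ τ) :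
    LinearIndepOn K (Hcol a b τ α C) {j | τ < j ∧ j < τ + (b - a)} := by
  refine linearIndepOn_of_exists_apply_eq_one fun j ⟨hτj, hj⟩ => ⟨⟨j - τ, by omega⟩, ?_, ?_⟩
  · rw [Hcol_apply_of_lt hab hbτ (by omega) hτj hj.le, if_pos (by omega)]
  · intro i ⟨hτi, hi⟩ hij
    rw [Hcol_apply_of_lt hab hbτ (by omega) hτi hi.le, if_neg (by omega)]

theorem linearIndepOn_bottomRows_Hcol (hab : a < b) (hbτ : b ≤ τ)
    (hC : allMinorsInvertible C a (τ + 1 - a)) {A : Finset ℕ}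
    (hA : ∀ j ∈ A, b - a ≤ j ∧ j ≤ τ + (b - a)) (hcard : A.card ≤ a) :
    LinearIndepOn K (bottomRows K hab.le ∘ Hcol a b τ α C)
      (A.filter fun j => j ≤ τ ∨ j = τ + (b - a)) := by
  let low := A.filter fun j => j ≤ τ ∨ j = τ + (b - a)
  let σ : ℕ → ℕ := fun j => if j ≤ τ then j else 0
  have hσ : Set.InjOn σ low := by
    intro i hi j hj h
    obtain ⟨hiA, hi⟩ := Finset.mem_filter.1 hi
    obtain ⟨hjA, hj⟩ := Finset.mem_filter.1 hj
    have := hA i hiA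
    have := hA j hjA
    simp only [σ] at h
    split_ifs at h <;> omega
  have himage : LinearIndepOn K (idAppendCol a C) (σ '' low) := by
    rw [← Finset.coe_image]
    refine linearIndepOn_idAppendCol hC (fun j hj => ?_) ?_
    · obtain ⟨i, hi, rfl⟩ := Finset.mem_image.1 hj
      have := hA i (Finset.mem_filter.1 hi).1
      simp only [σ]
      split_ifs <;> omega
    · exact Finset.card_image_le.trans ((Finset.card_filter_le _ _).trans hcard)
  refine (himage.comp_of_image hσ).congr fun j hj => ?_
  obtain ⟨-, hj | rfl⟩ := Finset.mem_filter.1 hj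
  · simp only [Function.comp_apply, σ, if_pos hj, bottomRows_Hcol_of_le hab hj]
  · simp only [Function.comp_apply, σ, if_neg (show ¬ τ + (b - a) ≤ τ by omega),
      bottomRows_Hcol_last hab hbτ]

end Hcol

theorem property_R2_general {K : Type*} [Field K] (a b τ : ℕ)
    (hab : a < b) (hbτ : b ≤ τ)
    (α : K) (C : ℕ → ℕ → K)
    (hC : allMinorsInvertible C a (τ + 1 - a))
    (A : Finset ℕ) (hA : ∀ j ∈ A, b - a ≤ j ∧ j ≤ τ + (b - a)) (hcard : A.card = a) :
    LinearIndependent K (fun j : {x // x ∈ A} => fun i : Fin b => Hmat a b τ α C i.val j.val) := by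
  show LinearIndepOn K (Hcol a b τ α C) (A : Set ℕ)
  have hmid := linearIndepOn_Hcol_of_lt (α := α) (C := C) hab hbτ
  have hmid_bottom : ∀ j ∈ {j | τ < j ∧ j < τ + (b - a)},
      bottomRows K hab.le (Hcol a b τ α C j) = 0 := fun j hj =>
    bottomRows_Hcol_of_lt hab hbτ hj.1 hj.2
  have hlow := linearIndepOn_bottomRows_Hcol (α := α) hab hbτ hC hA hcard.le
  refine (hmid.union_of_map_eq_zero _ hmid_bottom hlow).mono fun j hj => ?_
  have := hA j hj
  by_cases hτj : τ < j ∧ j < τ + (b - a)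
  · exact Or.inl hτj
  · refine Or.inr (Finset.mem_filter.2 ⟨hj, ?_⟩)
    omega

/-- Property R2: for every set `A ⊆ [δ : τ+δ]` of column indices with
`|A| = a`, the columns of `H` indexed by `A` are linearly independent over `K`. -/
theorem property_R2 {K : Type*} [Field K] (F : Subfield K) (a b τ : ℕ)
    (ha : 0 < a) (hab : a < b) (hbτ : b ≤ τ)
    (α : K) (hα : α ∉ F)
    (C : ℕ → ℕ → K) (hCF : ∀ i j, i < a → j < τ + 1 - a → C i j ∈ F)
    (hC : allMinorsInvertible C a (τ + 1 - a))
    (A : Finset ℕ) (hA : ∀ j ∈ A, b - a ≤ j ∧ j ≤ τ + (b - a)) (hcard : A.card = a) :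
    LinearIndependent K (fun j : {x // x ∈ A} => fun i : Fin b => Hmat a b τ α C i.val j.val) :=
  property_R2_general a b τ hab hbτ α C hC A hA hcard
end

section
/- Write τ = v·b + ℓ with 0 ≤ ℓ < b (so v ≥ 1). Suppose t satisfies δ ≤ t ≤ (v−1)b, and write t = x·b + θ with 0 ≤ θ < b. If θ ≥ δ, then det(H([0:b−1],[t : t+b−1])) = ε · det(H([δ:b−1], A)) for some ε ∈ {1, −1}, where A = [t : (x+1)b−1] ∪ [(x+1)b+δ : t+b−1] (a set of a column indices); in particular, H([0:b−1],[t : t+b−1]) is invertible over K. -/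
/-! The window `H([0:b-1],[t:t+b-1])` meets the `P`-part of the top `δ` rows only in the `δ`
columns `(x+1)·b + r`, `r < δ`, where it is the identity: `P^a_{δ,τ-b}` repeats with period `b`,
with its identity block at the start of each period, and `θ ≥ δ` keeps the window clear of the
other nonzero top entries. Expanding along these columns leaves, up to sign, the bottom rows on the
columns `A`, a square submatrix of `[I_a | C]`; expanding once more along its identity columns
leaves a square submatrix of `C`, which is invertible. -/

set_option linter.unusedVariables false

open Matrix

/-- `Fin d` goes onto the block `[s : s + d - 1]` of `Fin N`, and `Fin n` increasingly onto its
complement. -/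
noncomputable def finBlockInsertEquiv (d n s N : ℕ) (hs : s ≤ n) (hN : n + d = N) :
    Fin d ⊕ Fin n ≃ Fin N :=
  Equiv.ofBijective
    (Sum.elim (fun r => ⟨s + r, by omega⟩)
      (fun c => ⟨if c.val < s then c else c + d, by split <;> omega⟩))
    ((Fintype.bijective_iff_injective_and_card _).mpr
      ⟨by
        rintro (r₁ | c₁) (r₂ | c₂) h <;> simp only [Sum.elim_inl, Sum.elim_inr, Fin.mk.injEq] at h
        · exact congrArg _ (Fin.ext (by omega))
        · split at h <;> omega
        · split at h <;> omega
        · exact congrArg _ (Fin.ext (by split at h <;> split at h <;> omega)),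
       by simp [← hN, add_comm]⟩)

section finBlockInsertEquiv
variable {d n s N : ℕ} {hs : s ≤ n} {hN : n + d = N}

@[simp]
theorem finBlockInsertEquiv_inl_val (r : Fin d) :
    (finBlockInsertEquiv d n s N hs hN (.inl r) : ℕ) = s + r := rfl

@[simp]
theorem finBlockInsertEquiv_inr_val (c : Fin n) :
    (finBlockInsertEquiv d n s N hs hN (.inr c) : ℕ) = if c.val < s then c.val else c.val + d :=
  rfl

end finBlockInsertEquiv

section BlockDeterminant
variable {R m n p : Type*} [CommRing R] [Fintype m] [Fintype n] [Fintype p]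
  [DecidableEq m] [DecidableEq n] [DecidableEq p]

theorem Matrix.det_submatrix_equiv_equiv (e₁ e₂ : n ≃ m) (A : Matrix m m R) :
    (A.submatrix e₁ e₂).det = ((Equiv.Perm.sign (e₂.trans e₁.symm) : ℤ) : R) * A.det := by
  have h : A.submatrix e₁ e₂ = (A.submatrix e₁ e₁).submatrix id (e₂.trans e₁.symm) := by
    ext i j
    simp
  rw [h, det_permute', det_submatrix_equiv_self]

theorem Matrix.exists_det_eq_sign_mul_det_of_one_block (M : Matrix p p R) (e g : m ⊕ n ≃ p)
    (h₁₁ : ∀ i j, M (e (.inl i)) (g (.inl j)) = (1 : Matrix m m R) i j)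
    (hzero : (∀ i j, M (e (.inl i)) (g (.inr j)) = 0) ∨
      (∀ i j, M (e (.inr i)) (g (.inl j)) = 0)) :
    ∃ ε : R, (ε = 1 ∨ ε = -1) ∧
      M.det = ε * (Matrix.of fun i j => M (e (.inr i)) (g (.inr j))).det := by
  set σ := Equiv.Perm.sign (g.trans e.symm)
  have hσ : ((σ : ℤ) : R) = 1 ∨ ((σ : ℤ) : R) = -1 := by
    rcases Int.units_eq_one_or σ with h | h <;> simp [h]
  have hblocks : M.submatrix e g = fromBlocks 1 (M.submatrix e g).toBlocks₁₂
      (M.submatrix e g).toBlocks₂₁ (Matrix.of fun i j => M (e (.inr i)) (g (.inr j))) := by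
    rw [← fromBlocks_toBlocks (M.submatrix e g)]
    congr 1
    ext i j
    exact h₁₁ i j
  have hdet : ((σ : ℤ) : R) * M.det = (Matrix.of fun i j => M (e (.inr i)) (g (.inr j))).det := by
    rw [← det_submatrix_equiv_equiv, hblocks]
    rcases hzero with h | h
    · rw [show (M.submatrix e g).toBlocks₁₂ = 0 from ext h, det_fromBlocks_zero₁₂, det_one,
        one_mul]
    · rw [show (M.submatrix e g).toBlocks₂₁ = 0 from ext h, det_fromBlocks_zero₂₁, det_one,
        one_mul]
  refine ⟨σ, hσ, ?_⟩
  rw [← hdet, ← mul_assoc]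
  rcases hσ with h | h <;> simp [h]

end BlockDeterminant

theorem Pmat_mul_add {a b ℓ p q r : ℕ} (i : ℕ) (hab : a < b) (hr : r < b) (hqp : q < p) :
    Pmat a (b - a) (p * b + ℓ) i (q * b + r) = if i = r ∧ r < b - a then 1 else 0 := by
  induction q generalizing p with
  | zero =>
    obtain ⟨p, rfl⟩ : ∃ p', p = p' + 1 := ⟨p - 1, by omega⟩
    rw [Pmat, zero_mul, zero_add, add_one_mul]
    by_cases hp : b < p * b + b + ℓ
    · rw [dif_pos ⟨by omega, by omega⟩]
      by_cases hrδ : r < b - a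
      · simp [hrδ]
      · simp [hrδ, show r < b - a + a by omega]
    · rw [dif_neg (by omega), dif_neg (by omega)]
  | succ q ih =>
    obtain ⟨p, rfl⟩ : ∃ p', p = p' + 1 := ⟨p - 1, by omega⟩
    have hb : b ≤ p * b := Nat.le_mul_of_pos_left b (by omega)
    rw [add_one_mul, add_one_mul, Pmat, dif_pos ⟨by omega, by omega⟩, if_neg (by omega),
      if_neg (by omega)]
    convert ih (p := p) (by omega) using 2 <;> omega

section Hmat
variable {K : Type*} [Field K] {a b τ v : ℕ} {α : K} {C : ℕ → ℕ → K} {i j q r : ℕ}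

theorem Hmat_top_succ_mul_add (hab : a < b) (hτ : v * b ≤ τ)
    (hi : i < b - a) (hr : r < b) (hq : q + 1 < v) :
    Hmat a b τ α C i ((q + 1) * b + r) = if i = r then 1 else 0 := by
  obtain ⟨w, rfl⟩ : ∃ w, v = w + 1 := ⟨v - 1, by omega⟩
  have hτb : τ - b = w * b + (τ - (w + 1) * b) := by rw [add_one_mul] at hτ ⊢; omega
  have hqb : q * b + b + r < w * b + b := by
    nlinarith [Nat.mul_le_mul_right b (show q + 1 ≤ w by omega)]
  rw [Hmat, if_pos hi, if_neg (by rw [add_one_mul]; omega),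
    if_pos ⟨by rw [add_one_mul]; omega, by rw [add_one_mul]; omega⟩, hτb,
    show (q + 1) * b + r - b = q * b + r by rw [add_one_mul]; omega,
    Pmat_mul_add i hab hr (by omega)]
  rcases eq_or_ne i r with rfl | h
  · simp [hi]
  · simp [h]

theorem Hmat_top_mul_add_eq_zero (hab : a < b) (hτ : v * b ≤ τ)
    (hi : i < b - a) (hr₁ : b - a ≤ r) (hr₂ : r < b) (hq : q < v) :
    Hmat a b τ α C i (q * b + r) = 0 := by
  rcases q with _ | q
  · have hbτ : b ≤ τ := by nlinarith
    rw [zero_mul, zero_add, Hmat, if_pos hi, if_neg (by omega), if_neg (by omega),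
      if_neg (by omega), if_neg (by omega)]
  · rw [Hmat_top_succ_mul_add hab hτ hi hr₂ hq, if_neg (by omega)]

theorem Hmat_bottom_of_lt (hi : b - a ≤ i) (hj : j < a) :
    Hmat a b τ α C i j = if i = b - a + j then 1 else 0 := by
  rw [Hmat, if_neg (by omega), if_pos hj]

theorem Hmat_bottom_of_le (hi : b - a ≤ i) (hj₁ : a ≤ j) (hj₂ : j ≤ τ) :
    Hmat a b τ α C i j = C (i - (b - a)) (j - a) := by
  rw [Hmat, if_neg (by omega), if_neg (by omega), if_pos hj₂]

end Hmat

/-- The bottom rows of `H` are `[I_a | C]`; the identity columns `s, …, a - 1` split off, leaving a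
square submatrix of `C`. -/
theorem det_Hmat_bottom_ne_zero {K : Type*} [Field K] {a b τ : ℕ} {α : K} {C : ℕ → ℕ → K}
    (hC : allMinorsInvertible C a (τ + 1 - a)) (s : ℕ) (col : Fin a → ℕ)
    (hcol : Function.Injective col) (hlow : ∀ c : Fin a, s + c < a → col c = s + c)
    (hhigh : ∀ c : Fin a, a ≤ s + c → a ≤ col c) (hτ : ∀ c, col c ≤ τ) :
    (Matrix.of fun i j : Fin a => Hmat a b τ α C (b - a + i) (col j)).det ≠ 0 := by
  set k := a - s
  set e := finBlockInsertEquiv k (a - k) (a - k) a le_rfl (by omega)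
  set g := finBlockInsertEquiv k (a - k) 0 a (Nat.zero_le _) (by omega)
  have hcolg : ∀ j, a ≤ col (g (.inr j)) := fun j => hhigh _ (by simp [g]; omega)
  obtain ⟨ε, hε, hdet⟩ := Matrix.exists_det_eq_sign_mul_det_of_one_block
    (Matrix.of fun i j : Fin a => Hmat a b τ α C (b - a + i) (col j)) e g
    (fun i j => by
      simp only [of_apply, e, g, finBlockInsertEquiv_inl_val]
      rw [hlow _ (by simp; omega), Hmat_bottom_of_lt (by omega) (by simp; omega), one_apply]
      exact if_congr (by simp only [finBlockInsertEquiv_inl_val, Fin.ext_iff]; omega) rfl rfl)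
    (.inr fun i j => by
      simp only [of_apply, e, g, finBlockInsertEquiv_inr_val]
      rw [hlow _ (by simp; omega), Hmat_bottom_of_lt (by omega) (by simp; omega),
        if_neg (by split <;> omega)])
  rw [hdet]
  refine mul_ne_zero (by rcases hε with rfl | rfl <;> norm_num) ?_
  convert hC (a - k) (fun i => i) (fun j => col (g (.inr j)) - a) Fin.val_injective
    (fun j₁ j₂ h => Sum.inr_injective (g.injective (hcol (by
      have := hcolg j₁; have := hcolg j₂; simp only at h; omega))))
    (fun i => by omega) (fun j => by have := hτ (g (.inr j)); have := hcolg j; omega) using 2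
  ext i j
  simp only [of_apply, e, finBlockInsertEquiv_inr_val]
  rw [Hmat_bottom_of_le (by omega) (hcolg j) (hτ _), if_pos (by omega)]
  congr 1
  omega

theorem exists_det_Hmat_window_eq_sign_mul {K : Type*} [Field K] {a b τ v t x θ : ℕ} {α : K}
    {C : ℕ → ℕ → K} (hab : a < b) (hτ : v * b ≤ τ) (hx : x + 1 < v) (ht : t = x * b + θ)
    (hθb : θ < b) (hθ : b - a ≤ θ) :
    ∃ ε : K, (ε = 1 ∨ ε = -1) ∧
      (Matrix.of fun i j : Fin b => Hmat a b τ α C i.val (t + j.val)).det =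
        ε * (Matrix.of fun i j : Fin a =>
              Hmat a b τ α C ((b - a) + i.val)
                (if t + j.val < (x + 1) * b then t + j.val
                 else t + j.val + (b - a))).det := by
  have hxb : (x + 1) * b = x * b + b := add_one_mul x b
  obtain ⟨ε, hε, hdet⟩ := Matrix.exists_det_eq_sign_mul_det_of_one_block
    (Matrix.of fun i j : Fin b => Hmat a b τ α C i.val (t + j.val))
    (finBlockInsertEquiv (b - a) a 0 b (Nat.zero_le _) (by omega))
    (finBlockInsertEquiv (b - a) a (b - θ) b (by omega) (by omega))
    (fun i j => by
      simp only [of_apply, finBlockInsertEquiv_inl_val, zero_add]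
      rw [show t + (b - θ + j) = (x + 1) * b + j by omega,
        Hmat_top_succ_mul_add hab hτ i.isLt (by omega) hx, one_apply]
      exact if_congr Fin.ext_iff.symm rfl rfl)
    (.inl fun i c => by
      simp only [of_apply, finBlockInsertEquiv_inl_val, finBlockInsertEquiv_inr_val, zero_add]
      split
      · rw [show t + c = x * b + (θ + c) by omega]
        exact Hmat_top_mul_add_eq_zero hab hτ i.isLt (by omega) (by omega) (by omega)
      · rw [show t + (c + (b - a)) = (x + 1) * b + (θ + c + (b - a) - b) by omega]
        exact Hmat_top_mul_add_eq_zero hab hτ i.isLt (by omega) (by omega) hx)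
  refine ⟨ε, hε, hdet.trans ?_⟩
  congr 3 with i c
  simp only [of_apply, finBlockInsertEquiv_inr_val, Nat.not_lt_zero, if_false, add_comm (i : ℕ)]
  congr 1
  split_ifs <;> omega

theorem property_B2_case_i_large_theta_general {K : Type*} [Field K] (a b τ : ℕ)
    (hab : a < b)
    (α : K)
    (C : ℕ → ℕ → K)
    (hC : allMinorsInvertible C a (τ + 1 - a))
    (v ℓ : ℕ) (hτ : τ = v * b + ℓ)
    (t x θ : ℕ) (ht2 : t ≤ (v - 1) * b)
    (htxθ : t = x * b + θ) (hθb : θ < b) (hθ : b - a ≤ θ) :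
    (∃ ε : K, (ε = 1 ∨ ε = -1) ∧
      (Matrix.of fun i j : Fin b => Hmat a b τ α C i.val (t + j.val)).det =
        ε * (Matrix.of fun i j : Fin a =>
              Hmat a b τ α C ((b - a) + i.val)
                (if t + j.val < (x + 1) * b then t + j.val
                 else t + j.val + (b - a))).det) ∧
    (Matrix.of fun i j : Fin b => Hmat a b τ α C i.val (t + j.val)).det ≠ 0 := by
  have hx : x + 1 < v := by
    by_contra! h
    have : (v - 1) * b ≤ x * b := Nat.mul_le_mul_right _ (show v - 1 ≤ x by omega)
    omega
  have hxb : x * b + 2 * b ≤ v * b := by rw [← add_mul]; exact Nat.mul_le_mul_right b hx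
  have hxb' : (x + 1) * b = x * b + b := add_one_mul x b
  obtain ⟨ε, hε, hdet⟩ :=
    exists_det_Hmat_window_eq_sign_mul (α := α) (C := C) hab (show v * b ≤ τ by omega) hx htxθ
      hθb hθ
  have hN := det_Hmat_bottom_ne_zero (b := b) (α := α) hC t
    (fun j => if t + j.val < (x + 1) * b then t + j.val else t + j.val + (b - a))
    (fun j₁ j₂ h => Fin.ext (by simp only at h; split_ifs at h <;> omega))
    (fun c hc => if_pos (show t + c < (x + 1) * b by omega)) (fun c hc => by split <;> omega)
    (fun c => by split <;> omega)
  exact ⟨⟨ε, hε, hdet⟩, hdet ▸ mul_ne_zero (by rcases hε with rfl | rfl <;> norm_num) hN⟩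

/-- case i, `θ ≥ δ`: write `τ = v·b + ℓ`, `0 ≤ ℓ < b`, and let
`δ ≤ t ≤ (v-1)·b` with `t = x·b + θ`, `0 ≤ θ < b`.  If `θ ≥ δ` then
`det H([0:b-1],[t:t+b-1]) = ε · det H([δ:b-1],A)` for some `ε ∈ {1,-1}`, where
`A = [t : (x+1)·b-1] ∪ [(x+1)·b+δ : t+b-1]` is a set of `a` column indices (enumerated in
increasing order); in particular `H([0:b-1],[t:t+b-1])` is invertible over `K`. -/
theorem property_B2_case_i_large_theta {K : Type*} [Field K] (F : Subfield K) (a b τ : ℕ)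
    (ha : 0 < a) (hab : a < b) (hbτ : b ≤ τ)
    (α : K) (hα : α ∉ F)
    (C : ℕ → ℕ → K) (hCF : ∀ i j, i < a → j < τ + 1 - a → C i j ∈ F)
    (hC : allMinorsInvertible C a (τ + 1 - a))
    (v ℓ : ℕ) (hτ : τ = v * b + ℓ) (hℓ : ℓ < b)
    (t x θ : ℕ) (ht1 : b - a ≤ t) (ht2 : t ≤ (v - 1) * b)
    (htxθ : t = x * b + θ) (hθb : θ < b) (hθ : b - a ≤ θ) :
    (∃ ε : K, (ε = 1 ∨ ε = -1) ∧
      (Matrix.of fun i j : Fin b => Hmat a b τ α C i.val (t + j.val)).det =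
        ε * (Matrix.of fun i j : Fin a =>
              Hmat a b τ α C ((b - a) + i.val)
                (if t + j.val < (x + 1) * b then t + j.val
                 else t + j.val + (b - a))).det) ∧
    (Matrix.of fun i j : Fin b => Hmat a b τ α C i.val (t + j.val)).det ≠ 0 :=
  property_B2_case_i_large_theta_general a b τ hab α C hC v ℓ hτ t x θ ht2 htxθ hθb hθ
end
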